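/- For a finite group G, the canonical map from G to the group of monoidal natural automorphisms of the forgetful functor from finite-dimensional k-linear representations of G to finite-dimensional k-vector spaces, sending g to the natural automorphism whose component at a representation (V, ρ) is ρ(g), is an isomorphism of groups (Tannaka duality for finite groups). -/

import Mathlib

/-!
Mathlib's `TannakaDuality.FiniteGroup.equiv` identifies `G` with the automorphism group of the
forgetful functor in the category of lax monoidal functors. An automorphism there is the same as
an automorphism of the underlying functor whose hom is monoidal, its inverse being automatically
monoidal.
-/

open CategoryTheory MonoidalCategory

namespace CategoryTheory.LaxMonoidalFunctor

variable {C D : Type*} [Category C] [Category D] [MonoidalCategory C] [MonoidalCategory D]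
  (F : LaxMonoidalFunctor C D)

def autToFunctor : Aut F →* Aut F.toFunctor where
  toFun e := ⟨e.hom.hom, e.inv.hom, congrArg Hom.hom e.hom_inv_id, congrArg Hom.hom e.inv_hom_id⟩
  map_one' := rfl
  map_mul' _ _ := rfl

lemma autToFunctor_injective : Function.Injective F.autToFunctor := fun _ _ h =>
  Iso.ext (hom_ext (congrArg Iso.hom h))

lemma mem_range_autToFunctor_iff (τ : Aut F.toFunctor) :
    τ ∈ F.autToFunctor.range ↔ NatTrans.IsMonoidal τ.hom := by
  refine ⟨?_, fun _ => ⟨isoMk τ, rfl⟩⟩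
  rintro ⟨e, rfl⟩
  exact e.hom.isMonoidal

end CategoryTheory.LaxMonoidalFunctor

open TannakaDuality.FiniteGroup in
/-- **Tannaka duality for finite groups.** The canonical map from a finite
group `G` to the group of monoidal natural automorphisms of the forgetful functor
`FDRep k G ⥤ FGModuleCat k`, sending `g` to the automorphism with component `ρ(g)` at a
representation `(V, ρ)`, is an isomorphism onto the group of monoidal natural
automorphisms. -/
theorem tannaka_duality_finite_groups (k G : Type) [Field k] [Group G] [Finite G] :
    ∃ T : G →* Aut (Action.forget (FGModuleCat k) (MonCat.of G)),
      (∀ (g : G) (X : FDRep k G) (v : X), ((T g).hom.app X) v = X.ρ g v) ∧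
      (∀ g : G, NatTrans.IsMonoidal (T g).hom) ∧
      Function.Injective T ∧
      (∀ τ : Aut (Action.forget (FGModuleCat k) (MonCat.of G)),
        NatTrans.IsMonoidal τ.hom → ∃ g : G, T g = τ) := by
  refine ⟨(forget k G).autToFunctor.comp (equivHom k G), fun _ _ _ => rfl,
    fun g => ((forget k G).mem_range_autToFunctor_iff _).1 ⟨_, rfl⟩,
    (forget k G).autToFunctor_injective.comp equivHom_injective, fun τ hτ => ?_⟩
  obtain ⟨e, rfl⟩ := ((forget k G).mem_range_autToFunctor_iff τ).2 hτ
  obtain ⟨g, rfl⟩ := equivHom_surjective e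
  exact ⟨g, rfl⟩
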